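/- Consider the 2-odometer self-similar group (ℤ, {0,1}) extended by a symbol B: X_B = {0,1,B}, with z·0 = 1, z|_0 = e; z·1 = 0, z|_1 = z; z·B = B, z|_B = e. For every nonzero integer m, the set MSF_{z^m} of minimal strongly fixed words for z^m is finite. In particular, for m > 0, every minimal strongly fixed word has the form βB with β ∈ {0,1}*, z^m·β = β, and z^m·β = β holds if and only if 2^{|β|} divides m; hence |β| ≤ log₂(m). -/

import Mathlib

/-- A self-similar group `(G, X)`: a length-preserving action of `G` on the free
monoid `X*` (words modeled as lists) together with restriction maps, satisfying the
self-similarity identities `g·(uv) = (g·u)(g|_u · v)`, `g|_{uv} = (g|_u)|_v`, etc. -/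
structure SelfSimilar (G X : Type*) [Group G] where
  act : G → List X → List X
  res : G → List X → G
  length_act : ∀ (g : G) (w : List X), (act g w).length = w.length
  act_one : ∀ w : List X, act 1 w = w
  act_mul : ∀ (g h : G) (w : List X), act (g * h) w = act g (act h w)
  act_append : ∀ (g : G) (u v : List X), act g (u ++ v) = act g u ++ act (res g u) v
  res_nil : ∀ g : G, res g [] = g
  res_append : ∀ (g : G) (u v : List X), res g (u ++ v) = res (res g u) v
  res_one : ∀ w : List X, res 1 w = 1
  res_mul : ∀ (g h : G) (w : List X), res (g * h) w = res g (act h w) * res h w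

/-- The set of words strongly fixed by `g`: `g·α = α` and `g|_α = 1`. -/
def SF {G X : Type*} [Group G] (SS : SelfSimilar G X) (g : G) : Set (List X) :=
  {α | SS.act g α = α ∧ SS.res g α = 1}

/-- The set of minimal strongly fixed words of `g`: strongly fixed words no proper
prefix of which is strongly fixed. -/
def MSF {G X : Type*} [Group G] (SS : SelfSimilar G X) (g : G) : Set (List X) :=
  {α | α ∈ SF SS g ∧ ∀ β : List X, β <+: α → β ≠ α → β ∉ SF SS g}

/-- The alphabet `{0, 1, B}` of the modified odometer. -/
inductive XB : Type
  | zero : XB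
  | one : XB
  | B : XB
deriving DecidableEq

/-- The generator `z` of `ℤ` (written multiplicatively). -/
abbrev oz : Multiplicative ℤ := Multiplicative.ofAdd 1

/-!
Restriction at a word `w` is a homomorphism on the stabiliser of `w`. Since `z²` fixes the
letters `0` and `1` with restriction `z`, the power `z^{2k}` fixes them with restriction `z^k`,
while odd powers swap them. By induction, `z^m` fixes a `{0,1}`-word `β` iff `2^{|β|} ∣ m`, and
then restricts to `z^{m / 2^{|β|}}`. So for `m ≠ 0` a strongly fixed word must contain `B`, whose
restriction is trivial: the minimal ones are the words `βB` with `2^{|β|} ∣ m`, of length at most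
`log₂ |m| + 1`.
-/

namespace SelfSimilar

variable {G X : Type*} [Group G] (SS : SelfSimilar G X)

def stabilizer (w : List X) : Subgroup G where
  carrier := {g | SS.act g w = w}
  one_mem' := SS.act_one w
  mul_mem' {g h} (hg : SS.act g w = w) (hh : SS.act h w = w) :=
    show SS.act (g * h) w = w by rw [SS.act_mul, hh, hg]
  inv_mem' {g} (hg : SS.act g w = w) :=
    show SS.act g⁻¹ w = w by
      conv_lhs => rw [← hg, ← SS.act_mul, inv_mul_cancel, SS.act_one]

def resHom (w : List X) : SS.stabilizer w →* G where
  toFun g := SS.res g w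
  map_one' := SS.res_one w
  map_mul' g h := by
    simp only [Subgroup.coe_mul]
    rw [SS.res_mul, show SS.act h w = w from h.2]

variable {SS}

theorem act_zpow_eq_self {g : G} {w : List X} (h : SS.act g w = w) (k : ℤ) :
    SS.act (g ^ k) w = w :=
  ((⟨g, h⟩ : SS.stabilizer w) ^ k).2

theorem res_zpow_of_act_eq_self {g : G} {w : List X} (h : SS.act g w = w) (k : ℤ) :
    SS.res (g ^ k) w = SS.res g w ^ k :=
  map_zpow (SS.resHom w) ⟨g, h⟩ k

theorem act_append_eq_self_iff (g : G) (u v : List X) :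
    SS.act g (u ++ v) = u ++ v ↔ SS.act g u = u ∧ SS.act (SS.res g u) v = v := by
  rw [SS.act_append]
  exact ⟨fun h => List.append_inj h (SS.length_act g u), fun ⟨hu, hv⟩ => by rw [hu, hv]⟩

end SelfSimilar

theorem List.exists_eq_append_cons_notMem {α : Type*} {a : α} {l : List α} (h : a ∈ l) :
    ∃ s t, l = s ++ a :: t ∧ a ∉ s := by
  induction l with
  | nil => simp at h
  | cons b l ih =>
    by_cases hb : b = a
    · exact ⟨[], l, by simp [hb], List.not_mem_nil⟩
    · obtain ⟨s, t, rfl, hs⟩ := ih (by simpa [Ne.symm hb] using h)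
      exact ⟨b :: s, t, rfl, by simp [hs, Ne.symm hb]⟩

instance : Fintype XB := ⟨{XB.zero, XB.one, XB.B}, fun x => by cases x <;> simp⟩

structure IsModifiedOdometer (SS : SelfSimilar (Multiplicative ℤ) XB) : Prop where
  act_zero : SS.act oz [XB.zero] = [XB.one]
  res_zero : SS.res oz [XB.zero] = 1
  act_one : SS.act oz [XB.one] = [XB.zero]
  res_one : SS.res oz [XB.one] = oz
  act_B : SS.act oz [XB.B] = [XB.B]
  res_B : SS.res oz [XB.B] = 1

namespace IsModifiedOdometer

variable {SS : SelfSimilar (Multiplicative ℤ) XB}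

theorem act_zpow_B (hSS : IsModifiedOdometer SS) (m : ℤ) : SS.act (oz ^ m) [XB.B] = [XB.B] :=
  SelfSimilar.act_zpow_eq_self hSS.act_B m

theorem res_zpow_B (hSS : IsModifiedOdometer SS) (m : ℤ) : SS.res (oz ^ m) [XB.B] = 1 := by
  rw [SelfSimilar.res_zpow_of_act_eq_self hSS.act_B, hSS.res_B, one_zpow]

theorem act_res_sq_singleton (hSS : IsModifiedOdometer SS) {x : XB} (hx : x ≠ XB.B) :
    SS.act (oz ^ (2 : ℤ)) [x] = [x] ∧ SS.res (oz ^ (2 : ℤ)) [x] = oz := by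
  rw [zpow_two, SS.act_mul, SS.res_mul]
  cases x with
  | zero => simp [hSS.act_zero, hSS.act_one, hSS.res_zero, hSS.res_one]
  | one => simp [hSS.act_zero, hSS.act_one, hSS.res_zero, hSS.res_one]
  | B => exact absurd rfl hx

theorem act_zpow_two_mul_singleton (hSS : IsModifiedOdometer SS) {x : XB} (hx : x ≠ XB.B)
    (k : ℤ) : SS.act (oz ^ (2 * k)) [x] = [x] := by
  rw [zpow_mul]
  exact SelfSimilar.act_zpow_eq_self (hSS.act_res_sq_singleton hx).1 k

theorem res_zpow_two_mul_singleton (hSS : IsModifiedOdometer SS) {x : XB} (hx : x ≠ XB.B)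
    (k : ℤ) : SS.res (oz ^ (2 * k)) [x] = oz ^ k := by
  rw [zpow_mul, SelfSimilar.res_zpow_of_act_eq_self (hSS.act_res_sq_singleton hx).1,
    (hSS.act_res_sq_singleton hx).2]

theorem two_dvd_of_act_zpow_singleton_eq_self (hSS : IsModifiedOdometer SS) {x : XB}
    (hx : x ≠ XB.B) {m : ℤ} (h : SS.act (oz ^ m) [x] = [x]) : 2 ∣ m := by
  by_contra hodd
  obtain ⟨k, rfl⟩ : Odd m := Int.not_even_iff_odd.mp (fun he => hodd he.two_dvd)
  rw [zpow_add_one, mul_comm, SS.act_mul, hSS.act_zpow_two_mul_singleton hx] at h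
  cases x with
  | zero => simp [hSS.act_zero] at h
  | one => simp [hSS.act_one] at h
  | B => exact hx rfl

section BFree

variable {β : List XB}

theorem act_res_zpow_two_pow_mul (hSS : IsModifiedOdometer SS) (hβ : XB.B ∉ β) (k : ℤ) :
    SS.act (oz ^ (2 ^ β.length * k)) β = β ∧ SS.res (oz ^ (2 ^ β.length * k)) β = oz ^ k := by
  induction β generalizing k with
  | nil => simp [SS.res_nil, List.eq_nil_of_length_eq_zero (SS.length_act _ [])]
  | cons x β ih =>
    have hx : x ≠ XB.B := fun h => hβ (h ▸ List.mem_cons_self)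
    obtain ⟨hact, hres⟩ := ih (fun h => hβ (List.mem_cons_of_mem x h)) k
    have hpow : (2 : ℤ) ^ (x :: β).length * k = 2 * (2 ^ β.length * k) := by
      rw [List.length_cons, pow_succ]; ring
    rw [hpow, ← List.singleton_append, SS.act_append, SS.res_append,
      hSS.act_zpow_two_mul_singleton hx, hSS.res_zpow_two_mul_singleton hx, hact, hres]
    exact ⟨rfl, rfl⟩

theorem two_pow_length_dvd_of_act_zpow_eq_self (hSS : IsModifiedOdometer SS) (hβ : XB.B ∉ β)
    {m : ℤ} (h : SS.act (oz ^ m) β = β) : 2 ^ β.length ∣ m := by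
  induction β generalizing m with
  | nil => simp
  | cons x β ih =>
    have hx : x ≠ XB.B := fun h => hβ (h ▸ List.mem_cons_self)
    rw [← List.singleton_append, SelfSimilar.act_append_eq_self_iff] at h
    obtain ⟨k, rfl⟩ := hSS.two_dvd_of_act_zpow_singleton_eq_self hx h.1
    rw [hSS.res_zpow_two_mul_singleton hx] at h
    rw [List.length_cons, pow_succ, mul_comm]
    exact mul_dvd_mul_left 2 (ih (fun h => hβ (List.mem_cons_of_mem x h)) h.2)

theorem act_zpow_eq_self_iff (hSS : IsModifiedOdometer SS) (hβ : XB.B ∉ β) (m : ℤ) :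
    SS.act (oz ^ m) β = β ↔ 2 ^ β.length ∣ m := by
  refine ⟨hSS.two_pow_length_dvd_of_act_zpow_eq_self hβ, ?_⟩
  rintro ⟨k, rfl⟩
  exact (hSS.act_res_zpow_two_pow_mul hβ k).1

theorem eq_zero_of_mem_SF (hSS : IsModifiedOdometer SS) (hβ : XB.B ∉ β) {m : ℤ}
    (h : β ∈ SF SS (oz ^ m)) : m = 0 := by
  obtain ⟨k, rfl⟩ := hSS.two_pow_length_dvd_of_act_zpow_eq_self hβ h.1
  have hk : oz ^ k = 1 := (hSS.act_res_zpow_two_pow_mul hβ k).2 ▸ h.2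
  have hk0 : k = 0 := by simpa using congrArg Multiplicative.toAdd hk
  rw [hk0, mul_zero]

theorem append_B_mem_SF (hSS : IsModifiedOdometer SS) (hβ : XB.B ∉ β) {m : ℤ}
    (hm : 2 ^ β.length ∣ m) : β ++ [XB.B] ∈ SF SS (oz ^ m) := by
  obtain ⟨k, rfl⟩ := hm
  obtain ⟨hact, hres⟩ := hSS.act_res_zpow_two_pow_mul hβ k
  refine ⟨?_, ?_⟩
  · rw [SS.act_append, hact, hres, hSS.act_zpow_B]
  · rw [SS.res_append, hres, hSS.res_zpow_B]

end BFree

theorem exists_eq_append_B_of_mem_MSF (hSS : IsModifiedOdometer SS) {m : ℤ} (hm : m ≠ 0)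
    {α : List XB} (hα : α ∈ MSF SS (oz ^ m)) :
    ∃ β, α = β ++ [XB.B] ∧ XB.B ∉ β ∧ 2 ^ β.length ∣ m := by
  obtain ⟨hSF, hmin⟩ := hα
  have hB : XB.B ∈ α := by
    by_contra hB
    exact hm (hSS.eq_zero_of_mem_SF hB hSF)
  obtain ⟨β, γ, rfl, hβ⟩ := List.exists_eq_append_cons_notMem hB
  have hdvd : 2 ^ β.length ∣ m :=
    (hSS.act_zpow_eq_self_iff hβ m).1 ((SS.act_append_eq_self_iff _ _ _).1 hSF.1).1
  refine ⟨β, ?_, hβ, hdvd⟩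
  by_contra hne
  exact hmin _ ⟨γ, by simp⟩ (Ne.symm hne) (hSS.append_B_mem_SF hβ hdvd)

theorem MSF_finite (hSS : IsModifiedOdometer SS) {m : ℤ} (hm : m ≠ 0) :
    (MSF SS (oz ^ m)).Finite := by
  refine (List.finite_length_le XB (m.natAbs + 1)).subset fun α hα => ?_
  obtain ⟨β, rfl, hβ, hdvd⟩ := hSS.exists_eq_append_B_of_mem_MSF hm hα
  have hle : 2 ^ β.length ≤ m.natAbs := Nat.le_of_dvd (Int.natAbs_pos.mpr hm)
    (by exact_mod_cast Int.natAbs_dvd_natAbs.mpr hdvd)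
  have hlt := Nat.lt_two_pow_self (n := β.length)
  simp only [Set.mem_ofPred_eq, List.length_append, List.length_singleton]
  omega

end IsModifiedOdometer

/-- For the modified odometer self-similar group `(ℤ, {0,1,B})` determined by
`z·0 = 1, z|_0 = e`, `z·1 = 0, z|_1 = z`, `z·B = B, z|_B = e`: for every nonzero
`m`, `MSF_{z^m}` is finite; for `m > 0` every minimal strongly fixed word of `z^m`
has the form `βB` with `β ∈ {0,1}*` and `z^m·β = β`; and for `β ∈ {0,1}*`,
`z^m·β = β` holds iff `2^{|β|}` divides `m`, whence `2^{|β|} ≤ m`. -/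
theorem stmt19 (SS : SelfSimilar (Multiplicative ℤ) XB)
    (h0 : SS.act oz [XB.zero] = [XB.one]) (h0r : SS.res oz [XB.zero] = 1)
    (h1 : SS.act oz [XB.one] = [XB.zero]) (h1r : SS.res oz [XB.one] = oz)
    (hB : SS.act oz [XB.B] = [XB.B]) (hBr : SS.res oz [XB.B] = 1) :
    (∀ m : ℤ, m ≠ 0 → (MSF SS (oz ^ m)).Finite) ∧
    (∀ m : ℤ, 0 < m → ∀ α ∈ MSF SS (oz ^ m),
      ∃ β : List XB, α = β ++ [XB.B] ∧ XB.B ∉ β ∧ SS.act (oz ^ m) β = β) ∧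
    (∀ m : ℤ, 0 < m → ∀ β : List XB, XB.B ∉ β →
      (SS.act (oz ^ m) β = β ↔ ((2 : ℤ) ^ β.length ∣ m))) ∧
    (∀ m : ℤ, 0 < m → ∀ β : List XB, XB.B ∉ β → SS.act (oz ^ m) β = β →
      (2 : ℤ) ^ β.length ≤ m) := by
  have hSS : IsModifiedOdometer SS := ⟨h0, h0r, h1, h1r, hB, hBr⟩
  refine ⟨fun m hm => hSS.MSF_finite hm, fun m hm α hα => ?_,
    fun m _ β hβ => hSS.act_zpow_eq_self_iff hβ m,
    fun m hm β hβ h => Int.le_of_dvd hm ((hSS.act_zpow_eq_self_iff hβ m).1 h)⟩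
  obtain ⟨β, rfl, hβ, hdvd⟩ := hSS.exists_eq_append_B_of_mem_MSF hm.ne' hα
  exact ⟨β, rfl, hβ, (hSS.act_zpow_eq_self_iff hβ m).2 hdvd⟩
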